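/- Over any universe U with at least 5 elements, the FIFO paging algorithm is not stable: there exist a request sequence τ, a subset X ⊆ U, an item z ∈ X, and cache sizes a > b such that Out(FIFO_b, τ[X], z) ∩ FIFO_a(τz) ≠ ∅ but FIFO_b(τ[X]z) is not a subset of FIFO_a(τz). -/
import Mathlib


open scoped Classical

namespace SetAssoc

variable {U : Type*} [DecidableEq U]

/-- `τ[X]`: the subsequence of `τ` consisting of the requests to items of `X`. -/
noncomputable def restrict (τ : List U) (X : Set U) : List U :=
  τ.filter (fun a => decide (a ∈ X))

/-- The set of items evicted by `A_k` in response to a request `z` after serving `τ`. -/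
def Out (A : ℕ → List U → Finset U) (k : ℕ) (τ : List U) (z : U) : Finset U :=
  A k τ \ A k (τ ++ [z])

/-- One step of FIFO on the queue `q` of cached items (oldest-fetched first). -/
def fifoStep (k : ℕ) (q : List U) (z : U) : List U :=
  if z ∈ q then q
  else if q.length < k then q ++ [z]
  else q.tail ++ [z]

/-- The FIFO queue (cached items in order of fetch, oldest first) after serving `σ`. -/
def fifoQueue (k : ℕ) (σ : List U) : List U :=
  σ.foldl (fifoStep k) []

/-- The FIFO paging algorithm: the cache of size `k` after serving `σ`. -/
def FIFO (k : ℕ) (σ : List U) : Finset U :=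
  (fifoQueue k σ).toFinset

/-- **FIFO is not stable**, over any universe with at least 5 elements. -/
theorem fifo_not_stable (f : Fin 5 ↪ U) :
    ∃ (τ : List U) (X : Set U) (z : U) (a b : ℕ), z ∈ X ∧ b < a ∧
      (Out (FIFO (U := U)) b (restrict τ X) z ∩ FIFO a (τ ++ [z])).Nonempty ∧
      ¬ FIFO b (restrict τ X ++ [z]) ⊆ FIFO a (τ ++ [z]) := by
  have hne : ∀ i j : Fin 5, i ≠ j → f i ≠ f j := fun i j h => fun e => h (f.injective e)
  refine ⟨[f 0, f 1, f 2, f 0], Set.univ, f 3, 3, 2, trivial, by norm_num, ?_, ?_⟩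
  · have hres : restrict [f 0, f 1, f 2, f 0] (Set.univ : Set U) = [f 0, f 1, f 2, f 0] := by
      simp [restrict]
    rw [hres]
    refine ⟨f 2, ?_⟩
    have h01 := hne 0 1 (by decide); have h02 := hne 0 2 (by decide)
    have h03 := hne 0 3 (by decide); have h12 := hne 1 2 (by decide)
    have h13 := hne 1 3 (by decide); have h23 := hne 2 3 (by decide)
    simp [Out, FIFO, fifoQueue, fifoStep, h01, h02, h03, h12, h13, h23,
      h01.symm, h02.symm, h03.symm, h12.symm, h13.symm, h23.symm]
  · have hres : restrict [f 0, f 1, f 2, f 0] (Set.univ : Set U) = [f 0, f 1, f 2, f 0] := by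
      simp [restrict]
    rw [hres]
    intro hsub
    have h01 := hne 0 1 (by decide); have h02 := hne 0 2 (by decide)
    have h03 := hne 0 3 (by decide); have h12 := hne 1 2 (by decide)
    have h13 := hne 1 3 (by decide); have h23 := hne 2 3 (by decide)
    have h0 : f 0 ∈ FIFO (U := U) 2 ([f 0, f 1, f 2, f 0] ++ [f 3]) := by
      simp [FIFO, fifoQueue, fifoStep, h01, h02, h03, h12, h13, h23,
        h01.symm, h02.symm, h03.symm, h12.symm, h13.symm, h23.symm]
    have := hsub h0
    simp [FIFO, fifoQueue, fifoStep, h01, h02, h03, h12, h13, h23,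
      h01.symm, h02.symm, h03.symm, h12.symm, h13.symm, h23.symm] at this

end SetAssoc
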